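/- χ ∘ η is the identity homomorphism on G_{n,P}^2, where η : G_{n,P}^2 → H_{n,D}^2 ⊂ G_{n,D}^2 sends a_{ij}^0 ↦ a_{ij}, a_{ij}^1 ↦ τ_i a_{ij} τ_i, and χ : H_{n,D}^2 → G_{n,P}^2 assigns to each crossing generator a_{ij} the parity equal to the number mod 2 of preceding τ_i's plus preceding τ_j's. -/

import Mathlib

/-- Index type for the generators `a_{ij}`: two-element subsets of `Fin n`. -/
abbrev PairIdx (n : ℕ) := {s : Finset (Fin n) // s.card = 2}

/-- The unordered pair `{i,j}` as an index. -/
def mkPair {n : ℕ} (i j : Fin n) (h : i ≠ j) : PairIdx n := ⟨{i, j}, Finset.card_pair h⟩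

/-- Relations of the group `G_n^2`. -/
def gn2Rels (n : ℕ) : Set (FreeGroup (PairIdx n)) :=
  {r | (∃ (i j : Fin n) (h : i ≠ j),
          r = FreeGroup.of (mkPair i j h) * FreeGroup.of (mkPair i j h)) ∨
       (∃ (i j k l : Fin n) (hij : i ≠ j) (hkl : k ≠ l),
          i ≠ k ∧ i ≠ l ∧ j ≠ k ∧ j ≠ l ∧
          r = FreeGroup.of (mkPair i j hij) * FreeGroup.of (mkPair k l hkl) *
              (FreeGroup.of (mkPair i j hij))⁻¹ * (FreeGroup.of (mkPair k l hkl))⁻¹) ∨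
       (∃ (i j k : Fin n) (hij : i ≠ j) (hik : i ≠ k) (hjk : j ≠ k),
          r = FreeGroup.of (mkPair i j hij) * FreeGroup.of (mkPair i k hik) *
              FreeGroup.of (mkPair j k hjk) *
              (FreeGroup.of (mkPair j k hjk) * FreeGroup.of (mkPair i k hik) *
               FreeGroup.of (mkPair i j hij))⁻¹)}

/-- The group `G_n^2`. -/
abbrev Gn2 (n : ℕ) := PresentedGroup (gn2Rels n)

/-- The generator `a_{ij}` of `G_n^2`. -/
def A2 {n : ℕ} (i j : Fin n) (h : i ≠ j) : Gn2 n := PresentedGroup.of (mkPair i j h)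

/-- Relations of the group `G_{n,P}^2` (`G_n^2` with parity). -/
def gnP2Rels (n : ℕ) : Set (FreeGroup (PairIdx n × ZMod 2)) :=
  {r | (∃ (i j : Fin n) (h : i ≠ j) (ε : ZMod 2),
          r = FreeGroup.of (mkPair i j h, ε) * FreeGroup.of (mkPair i j h, ε)) ∨
       (∃ (i j k l : Fin n) (hij : i ≠ j) (hkl : k ≠ l) (ε₁ ε₂ : ZMod 2),
          i ≠ k ∧ i ≠ l ∧ j ≠ k ∧ j ≠ l ∧
          r = FreeGroup.of (mkPair i j hij, ε₁) * FreeGroup.of (mkPair k l hkl, ε₂) *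
              (FreeGroup.of (mkPair i j hij, ε₁))⁻¹ * (FreeGroup.of (mkPair k l hkl, ε₂))⁻¹) ∨
       (∃ (i j k : Fin n) (hij : i ≠ j) (hik : i ≠ k) (hjk : j ≠ k)
          (εij εik εjk : ZMod 2), εij + εik + εjk = 0 ∧
          r = FreeGroup.of (mkPair i j hij, εij) * FreeGroup.of (mkPair i k hik, εik) *
              FreeGroup.of (mkPair j k hjk, εjk) *
              (FreeGroup.of (mkPair j k hjk, εjk) * FreeGroup.of (mkPair i k hik, εik) *
               FreeGroup.of (mkPair i j hij, εij))⁻¹)}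

/-- The group `G_{n,P}^2`. -/
abbrev GnP2 (n : ℕ) := PresentedGroup (gnP2Rels n)

/-- The generator `a_{ij}^ε` of `G_{n,P}^2`. -/
def AP {n : ℕ} (i j : Fin n) (h : i ≠ j) (ε : ZMod 2) : GnP2 n :=
  PresentedGroup.of (mkPair i j h, ε)

/-- Alphabet of `G_{n,D}^2`: crossing generators `a_{ij}` and point generators `τ_i`. -/
abbrev DIdx (n : ℕ) := PairIdx n ⊕ Fin n

/-- Relations of the group `G_{n,D}^2` (`G_n^2` with points). -/
def gnD2Rels (n : ℕ) : Set (FreeGroup (DIdx n)) :=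
  {r | (∃ (i j : Fin n) (h : i ≠ j),
          r = FreeGroup.of (Sum.inl (mkPair i j h) : DIdx n) *
              FreeGroup.of (Sum.inl (mkPair i j h) : DIdx n)) ∨
       (∃ (i j k l : Fin n) (hij : i ≠ j) (hkl : k ≠ l),
          i ≠ k ∧ i ≠ l ∧ j ≠ k ∧ j ≠ l ∧
          r = FreeGroup.of (Sum.inl (mkPair i j hij) : DIdx n) *
              FreeGroup.of (Sum.inl (mkPair k l hkl) : DIdx n) *
              (FreeGroup.of (Sum.inl (mkPair i j hij) : DIdx n))⁻¹ *
              (FreeGroup.of (Sum.inl (mkPair k l hkl) : DIdx n))⁻¹) ∨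
       (∃ (i j k : Fin n) (hij : i ≠ j) (hik : i ≠ k) (hjk : j ≠ k),
          r = FreeGroup.of (Sum.inl (mkPair i j hij) : DIdx n) *
              FreeGroup.of (Sum.inl (mkPair i k hik) : DIdx n) *
              FreeGroup.of (Sum.inl (mkPair j k hjk) : DIdx n) *
              (FreeGroup.of (Sum.inl (mkPair j k hjk) : DIdx n) *
               FreeGroup.of (Sum.inl (mkPair i k hik) : DIdx n) *
               FreeGroup.of (Sum.inl (mkPair i j hij) : DIdx n))⁻¹) ∨
       (∃ i : Fin n,
          r = FreeGroup.of (Sum.inr i : DIdx n) * FreeGroup.of (Sum.inr i : DIdx n)) ∨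
       (∃ i j : Fin n,
          r = FreeGroup.of (Sum.inr i : DIdx n) * FreeGroup.of (Sum.inr j : DIdx n) *
              (FreeGroup.of (Sum.inr i : DIdx n))⁻¹ * (FreeGroup.of (Sum.inr j : DIdx n))⁻¹) ∨
       (∃ (i j : Fin n) (h : i ≠ j),
          r = FreeGroup.of (Sum.inr i : DIdx n) * FreeGroup.of (Sum.inr j : DIdx n) *
              FreeGroup.of (Sum.inl (mkPair i j h) : DIdx n) *
              FreeGroup.of (Sum.inr j : DIdx n) * FreeGroup.of (Sum.inr i : DIdx n) *
              (FreeGroup.of (Sum.inl (mkPair i j h) : DIdx n))⁻¹) ∨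
       (∃ (i j k : Fin n) (h : i ≠ j), k ≠ i ∧ k ≠ j ∧
          r = FreeGroup.of (Sum.inl (mkPair i j h) : DIdx n) *
              FreeGroup.of (Sum.inr k : DIdx n) *
              (FreeGroup.of (Sum.inl (mkPair i j h) : DIdx n))⁻¹ *
              (FreeGroup.of (Sum.inr k : DIdx n))⁻¹)}

/-- The group `G_{n,D}^2`. -/
abbrev GnD2 (n : ℕ) := PresentedGroup (gnD2Rels n)

/-- The generator `a_{ij}` of `G_{n,D}^2`. -/
def AD {n : ℕ} (i j : Fin n) (h : i ≠ j) : GnD2 n := PresentedGroup.of (Sum.inl (mkPair i j h))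

/-- The generator `τ_i` of `G_{n,D}^2`. -/
def T {n : ℕ} (i : Fin n) : GnD2 n := PresentedGroup.of (Sum.inr i)

/-- The number of occurrences of `τ_i` (with either sign) in a word over the alphabet of
`G_{n,D}^2`. -/
def tauCount {n : ℕ} (i : Fin n) (L : List (DIdx n × Bool)) : ℕ :=
  L.countP (fun p => p.1 = Sum.inr i)

/-- The image of a word in `G_{n,D}^2`. -/
def mkD (n : ℕ) (L : List (DIdx n × Bool)) : GnD2 n :=
  PresentedGroup.mk (gnD2Rels n) (FreeGroup.mk L)

/-- The word-level map `χ`: reading a word over the alphabet of `G_{n,D}^2` from left to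
right (and keeping, for each strand `i`, the running parity `N i` of the number of `τ_i`'s
seen so far), each crossing letter `a_{ij}` is sent to `a_{ij}^{N i + N j}` in `G_{n,P}^2`
and the `τ`'s are dropped. -/
def chiWord (n : ℕ) : List (DIdx n × Bool) → (Fin n → ZMod 2) → GnP2 n
  | [], _ => 1
  | (Sum.inl s, _) :: L, N =>
      PresentedGroup.of (s, ∑ x ∈ s.1, N x) * chiWord n L N
  | (Sum.inr i, _) :: L, N =>
      chiWord n L (Function.update N i (N i + 1))


/-!
The map `η` is well defined because `τ_i a_{ij} τ_i = τ_j a_{ij} τ_j` (a rewriting of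
`τ_i τ_j a_{ij} τ_j τ_i = a_{ij}`), so `η(a_s^1)` may be taken as the conjugate of `a_s` by the
`τ` of either strand of `s`; a parity triple relation with two odd parities is then the plain
triple relation conjugated by the `τ` of the common strand.

The word map `χ` is read off a homomorphism `Ψ : G_{n,D}^2 → G_{n,P}^2 ≀ (ℤ/2)^n` into the
regular wreath product, sending `τ_i` to the translation by `e_i` and `a_s` to the base element
`N ↦ a_s^{N(s)}`, where `N(s)` is the sum of the parities `N` over the strands of `s`.
Evaluating the base component of `Ψ` of a word at the state `N` is `χ` started in `N`, so
`χ` of a word only depends on its class in `G_{n,D}^2`. Finally `Ψ(η(a_s^ε))` is the base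
element `N ↦ a_s^{ε + N(s)}`, whose value at `N = 0` is `a_s^ε`; the `β` for which `Ψ(η β)`
is a base element with value `β` at `0` form a subgroup, which therefore is everything.
-/

variable {n : ℕ}

lemma zmod_two_eq_zero_or_one (ε : ZMod 2) : ε = 0 ∨ ε = 1 := by
  revert ε; decide

lemma PairIdx.exists_eq_mkPair (s : PairIdx n) :
    ∃ (i j : Fin n) (h : i ≠ j), s = mkPair i j h := by
  obtain ⟨i, j, h, hs⟩ := Finset.card_eq_two.mp s.2
  exact ⟨i, j, h, Subtype.ext hs⟩

@[simp]
lemma mem_mkPair {i j k : Fin n} {h : i ≠ j} : k ∈ (mkPair i j h).1 ↔ k = i ∨ k = j := by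
  simp [mkPair]

lemma disjoint_mkPair {i j k l : Fin n} (hij : i ≠ j) (hkl : k ≠ l)
    (hik : i ≠ k) (hil : i ≠ l) (hjk : j ≠ k) (hjl : j ≠ l) :
    Disjoint (mkPair i j hij).1 (mkPair k l hkl).1 := by
  simp [mkPair, hik.symm, hil.symm, hjk.symm, hjl.symm]

lemma AD_mul_self (i j : Fin n) (h : i ≠ j) : AD i j h * AD i j h = 1 :=
  PresentedGroup.one_of_mem (Or.inl ⟨i, j, h, rfl⟩)

lemma commute_AD_AD {i j k l : Fin n} (hij : i ≠ j) (hkl : k ≠ l)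
    (hik : i ≠ k) (hil : i ≠ l) (hjk : j ≠ k) (hjl : j ≠ l) :
    Commute (AD i j hij) (AD k l hkl) :=
  commutatorElement_eq_one_iff_commute.mp <|
    PresentedGroup.one_of_mem (Or.inr (Or.inl ⟨i, j, k, l, hij, hkl, hik, hil, hjk, hjl, rfl⟩))

lemma AD_triple (i j k : Fin n) (hij : i ≠ j) (hik : i ≠ k) (hjk : j ≠ k) :
    AD i j hij * AD i k hik * AD j k hjk = AD j k hjk * AD i k hik * AD i j hij :=
  mul_inv_eq_one.mp <|
    PresentedGroup.one_of_mem (Or.inr (Or.inr (Or.inl ⟨i, j, k, hij, hik, hjk, rfl⟩)))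

lemma T_mul_self (i : Fin n) : T i * T i = 1 :=
  PresentedGroup.one_of_mem (Or.inr (Or.inr (Or.inr (Or.inl ⟨i, rfl⟩))))

lemma commute_T_T (i j : Fin n) : Commute (T i) (T j) :=
  commutatorElement_eq_one_iff_commute.mp <|
    PresentedGroup.one_of_mem (Or.inr (Or.inr (Or.inr (Or.inr (Or.inl ⟨i, j, rfl⟩)))))

lemma T_T_AD_T_T (i j : Fin n) (h : i ≠ j) : T i * T j * AD i j h * T j * T i = AD i j h :=
  mul_inv_eq_one.mp <|
    PresentedGroup.one_of_mem
      (Or.inr (Or.inr (Or.inr (Or.inr (Or.inr (Or.inl ⟨i, j, h, rfl⟩))))))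

lemma commute_T_AD {i j k : Fin n} (h : i ≠ j) (hki : k ≠ i) (hkj : k ≠ j) :
    Commute (T k) (AD i j h) :=
  (commutatorElement_eq_one_iff_commute.mp <| PresentedGroup.one_of_mem
    (Or.inr (Or.inr (Or.inr (Or.inr (Or.inr (Or.inr ⟨i, j, k, h, hki, hkj, rfl⟩))))))).symm

lemma AP_mul_self (i j : Fin n) (h : i ≠ j) (ε : ZMod 2) : AP i j h ε * AP i j h ε = 1 :=
  PresentedGroup.one_of_mem (Or.inl ⟨i, j, h, ε, rfl⟩)

lemma commute_AP_AP {i j k l : Fin n} (hij : i ≠ j) (hkl : k ≠ l)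
    (hik : i ≠ k) (hil : i ≠ l) (hjk : j ≠ k) (hjl : j ≠ l) (ε₁ ε₂ : ZMod 2) :
    Commute (AP i j hij ε₁) (AP k l hkl ε₂) :=
  commutatorElement_eq_one_iff_commute.mp <| PresentedGroup.one_of_mem
    (Or.inr (Or.inl ⟨i, j, k, l, hij, hkl, ε₁, ε₂, hik, hil, hjk, hjl, rfl⟩))

lemma AP_triple {i j k : Fin n} (hij : i ≠ j) (hik : i ≠ k) (hjk : j ≠ k)
    {εij εik εjk : ZMod 2} (hε : εij + εik + εjk = 0) :
    AP i j hij εij * AP i k hik εik * AP j k hjk εjk =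
      AP j k hjk εjk * AP i k hik εik * AP i j hij εij :=
  mul_inv_eq_one.mp <| PresentedGroup.one_of_mem
    (Or.inr (Or.inr ⟨i, j, k, hij, hik, hjk, εij, εik, εjk, hε, rfl⟩))

lemma lift_eq_one_of_mem_gnP2Rels {G : Type*} [Group G] {f : PairIdx n × ZMod 2 → G}
    (mul_self : ∀ i j (h : i ≠ j) ε, f (mkPair i j h, ε) * f (mkPair i j h, ε) = 1)
    (commute_far : ∀ (i j k l : Fin n) (hij : i ≠ j) (hkl : k ≠ l) ε₁ ε₂,
      i ≠ k → i ≠ l → j ≠ k → j ≠ l →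
        Commute (f (mkPair i j hij, ε₁)) (f (mkPair k l hkl, ε₂)))
    (triple : ∀ (i j k : Fin n) (hij : i ≠ j) (hik : i ≠ k) (hjk : j ≠ k)
      (εij εik εjk : ZMod 2), εij + εik + εjk = 0 →
        f (mkPair i j hij, εij) * f (mkPair i k hik, εik) * f (mkPair j k hjk, εjk) =
          f (mkPair j k hjk, εjk) * f (mkPair i k hik, εik) * f (mkPair i j hij, εij)) :
    ∀ r ∈ gnP2Rels n, FreeGroup.lift f r = 1 := by
  rintro r (⟨i, j, h, ε, rfl⟩ |
    ⟨i, j, k, l, hij, hkl, ε₁, ε₂, hik, hil, hjk, hjl, rfl⟩ |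
    ⟨i, j, k, hij, hik, hjk, εij, εik, εjk, hε, rfl⟩) <;>
    simp only [map_mul, map_inv, FreeGroup.lift_apply_of, mul_inv_eq_one]
  · exact mul_self i j h ε
  · exact (commute_far i j k l hij hkl ε₁ ε₂ hik hil hjk hjl).mul_inv_cancel
  · exact triple i j k hij hik hjk εij εik εjk hε

lemma lift_eq_one_of_mem_gnD2Rels {G : Type*} [Group G] {f : DIdx n → G}
    (a_mul_self : ∀ i j (h : i ≠ j), f (.inl (mkPair i j h)) * f (.inl (mkPair i j h)) = 1)
    (commute_a_a : ∀ (i j k l : Fin n) (hij : i ≠ j) (hkl : k ≠ l),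
      i ≠ k → i ≠ l → j ≠ k → j ≠ l →
        Commute (f (.inl (mkPair i j hij))) (f (.inl (mkPair k l hkl))))
    (a_triple : ∀ (i j k : Fin n) (hij : i ≠ j) (hik : i ≠ k) (hjk : j ≠ k),
      f (.inl (mkPair i j hij)) * f (.inl (mkPair i k hik)) * f (.inl (mkPair j k hjk)) =
        f (.inl (mkPair j k hjk)) * f (.inl (mkPair i k hik)) * f (.inl (mkPair i j hij)))
    (t_mul_self : ∀ i, f (.inr i) * f (.inr i) = 1)
    (commute_t_t : ∀ i j, Commute (f (.inr i)) (f (.inr j)))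
    (t_t_a_t_t : ∀ i j (h : i ≠ j),
      f (.inr i) * f (.inr j) * f (.inl (mkPair i j h)) * f (.inr j) * f (.inr i) =
        f (.inl (mkPair i j h)))
    (commute_a_t : ∀ (i j k : Fin n) (h : i ≠ j),
      k ≠ i → k ≠ j → Commute (f (.inl (mkPair i j h))) (f (.inr k))) :
    ∀ r ∈ gnD2Rels n, FreeGroup.lift f r = 1 := by
  rintro r (⟨i, j, h, rfl⟩ | ⟨i, j, k, l, hij, hkl, hik, hil, hjk, hjl, rfl⟩ |
    ⟨i, j, k, hij, hik, hjk, rfl⟩ | ⟨i, rfl⟩ | ⟨i, j, rfl⟩ | ⟨i, j, h, rfl⟩ |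
    ⟨i, j, k, h, hki, hkj, rfl⟩) <;>
    simp only [map_mul, map_inv, FreeGroup.lift_apply_of, mul_inv_eq_one]
  · exact a_mul_self i j h
  · exact (commute_a_a i j k l hij hkl hik hil hjk hjl).mul_inv_cancel
  · exact a_triple i j k hij hik hjk
  · exact t_mul_self i
  · exact (commute_t_t i j).mul_inv_cancel
  · exact t_t_a_t_t i j h
  · exact (commute_a_t i j k h hki hkj).mul_inv_cancel

def aD (s : PairIdx n) : GnD2 n := PresentedGroup.of (Sum.inl s)

@[simp]
lemma aD_mkPair (i j : Fin n) (h : i ≠ j) : aD (mkPair i j h) = AD i j h := rfl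

lemma aD_mul_self (s : PairIdx n) : aD s * aD s = 1 := by
  obtain ⟨i, j, h, rfl⟩ := s.exists_eq_mkPair
  exact AD_mul_self i j h

def PairIdx.min (s : PairIdx n) : Fin n :=
  s.1.min' (Finset.card_pos.mp (by rw [s.2]; exact two_pos))

lemma PairIdx.min_mem (s : PairIdx n) : s.min ∈ s.1 := Finset.min'_mem s.1 _

lemma T_inv (i : Fin n) : (T i)⁻¹ = T i := inv_eq_of_mul_eq_one_right (T_mul_self i)

lemma commute_T_aD {k : Fin n} {s : PairIdx n} (hk : k ∉ s.1) : Commute (T k) (aD s) := by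
  obtain ⟨i, j, h, rfl⟩ := s.exists_eq_mkPair
  simp only [mem_mkPair, not_or] at hk
  exact commute_T_AD h hk.1 hk.2

lemma commute_aD_aD {s s' : PairIdx n} (hss' : Disjoint s.1 s'.1) : Commute (aD s) (aD s') := by
  obtain ⟨i, j, hij, rfl⟩ := s.exists_eq_mkPair
  obtain ⟨k, l, hkl, rfl⟩ := s'.exists_eq_mkPair
  simp only [mkPair, Finset.disjoint_insert_left, Finset.disjoint_singleton_left,
    Finset.mem_insert, Finset.mem_singleton, not_or] at hss'
  exact commute_AD_AD hij hkl hss'.1.1 hss'.1.2 hss'.2.1 hss'.2.2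

lemma T_AD_T_of_mem {i j k : Fin n} (h : i ≠ j) (hk : k ∈ (mkPair i j h).1) :
    T k * AD i j h * T k = T i * AD i j h * T i := by
  rcases mem_mkPair.mp hk with rfl | rfl
  · rfl
  · conv_rhs => rw [← T_T_AD_T_T i k h]
    simp only [← mul_assoc, T_mul_self, one_mul]
    simp only [mul_assoc, T_mul_self, mul_one]

def etaGen (p : PairIdx n × ZMod 2) : GnD2 n :=
  T p.1.min ^ p.2.val * aD p.1 * T p.1.min ^ p.2.val

lemma etaGen_zero (s : PairIdx n) : etaGen (s, 0) = aD s := by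
  simp [etaGen]

lemma etaGen_one (i j : Fin n) (h : i ≠ j) :
    etaGen (mkPair i j h, 1) = T i * AD i j h * T i := by
  simpa [etaGen, ZMod.val_one_eq_one_mod] using T_AD_T_of_mem h (PairIdx.min_mem _)

lemma etaGen_eq_conj {s : PairIdx n} {ε : ZMod 2} {c : Fin n} (hc : c ∈ s.1 ↔ ε = 1) :
    etaGen (s, ε) = MulAut.conj (T c) (aD s) := by
  obtain ⟨i, j, h, rfl⟩ := s.exists_eq_mkPair
  rw [MulAut.conj_apply]
  rcases zmod_two_eq_zero_or_one ε with rfl | rfl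
  · rw [etaGen_zero, (commute_T_aD (by simpa using hc)).mul_inv_cancel]
  · rw [etaGen_one, T_inv]
    exact (T_AD_T_of_mem h (hc.mpr rfl)).symm

lemma commute_etaGen {x : GnD2 n} {s : PairIdx n} (ε : ZMod 2) (hT : Commute x (T s.min))
    (ha : Commute x (aD s)) : Commute x (etaGen (s, ε)) :=
  ((hT.pow_right _).mul_right ha).mul_right (hT.pow_right _)

lemma commute_etaGen_etaGen {s s' : PairIdx n} (hss' : Disjoint s.1 s'.1) (ε ε' : ZMod 2) :
    Commute (etaGen (s, ε)) (etaGen (s', ε')) := by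
  have hmin : s.min ∉ s'.1 := Finset.disjoint_left.mp hss' s.min_mem
  have hmin' : s'.min ∉ s.1 := Finset.disjoint_right.mp hss' s'.min_mem
  refine commute_etaGen ε' (commute_etaGen ε ?_ ?_).symm (commute_etaGen ε ?_ ?_).symm
  · exact commute_T_T _ _
  · exact commute_T_aD hmin'
  · exact (commute_T_aD hmin).symm
  · exact commute_aD_aD hss'.symm

lemma etaGen_triple {i j k : Fin n} (hij : i ≠ j) (hik : i ≠ k) (hjk : j ≠ k)
    {εij εik εjk : ZMod 2} (hε : εij + εik + εjk = 0) :
    etaGen (mkPair i j hij, εij) * etaGen (mkPair i k hik, εik) * etaGen (mkPair j k hjk, εjk) =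
      etaGen (mkPair j k hjk, εjk) * etaGen (mkPair i k hik, εik) *
        etaGen (mkPair i j hij, εij) := by
  -- if two parities are `1`, all three factors are conjugates by `τ` of the common strand
  have conj_triple (c : Fin n) (hcij : c ∈ (mkPair i j hij).1 ↔ εij = 1)
      (hcik : c ∈ (mkPair i k hik).1 ↔ εik = 1)
      (hcjk : c ∈ (mkPair j k hjk).1 ↔ εjk = 1) :
      etaGen (mkPair i j hij, εij) * etaGen (mkPair i k hik, εik) *
          etaGen (mkPair j k hjk, εjk) =
        etaGen (mkPair j k hjk, εjk) * etaGen (mkPair i k hik, εik) *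
          etaGen (mkPair i j hij, εij) := by
    simp only [etaGen_eq_conj hcij, etaGen_eq_conj hcik, etaGen_eq_conj hcjk, ← map_mul]
    exact congrArg _ (AD_triple i j k hij hik hjk)
  rcases zmod_two_eq_zero_or_one εij with rfl | rfl <;>
    rcases zmod_two_eq_zero_or_one εik with rfl | rfl <;>
    rcases zmod_two_eq_zero_or_one εjk with rfl | rfl
  · simpa only [etaGen_zero, aD_mkPair] using AD_triple i j k hij hik hjk
  · exact absurd hε (by decide)
  · exact absurd hε (by decide)
  · exact conj_triple k (by simp [hik.symm, hjk.symm]) (by simp) (by simp)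
  · exact absurd hε (by decide)
  · exact conj_triple j (by simp) (by simp [hij.symm, hjk]) (by simp)
  · exact conj_triple i (by simp) (by simp) (by simp [hij, hik])
  · exact absurd hε (by decide)

lemma etaGen_mul_self (p : PairIdx n × ZMod 2) : etaGen p * etaGen p = 1 := by
  obtain ⟨s, ε⟩ := p
  rcases zmod_two_eq_zero_or_one ε with rfl | rfl
  · rw [etaGen_zero, aD_mul_self]
  · rw [etaGen_eq_conj (c := s.min) (by simp [s.min_mem]), ← map_mul, aD_mul_self, map_one]

def eta : GnP2 n →* GnD2 n :=
  PresentedGroup.toGroup <| lift_eq_one_of_mem_gnP2Rels (f := etaGen)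
    (fun _ _ _ _ => etaGen_mul_self _)
    (fun _ _ _ _ hij hkl ε₁ ε₂ hik hil hjk hjl =>
      commute_etaGen_etaGen (disjoint_mkPair hij hkl hik hil hjk hjl) ε₁ ε₂)
    (fun _ _ _ hij hik hjk _ _ _ hε => etaGen_triple hij hik hjk hε)

lemma eta_of (p : PairIdx n × ZMod 2) : eta (PresentedGroup.of p) = etaGen p :=
  PresentedGroup.toGroup.of _

namespace RegularWreathProduct

variable {D Q : Type*} [Group D] [Group Q]

def base : (Q → D) →* D ≀ᵣ Q where
  toFun f := ⟨f, 1⟩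
  map_one' := rfl
  map_mul' f g := by ext <;> simp

@[simp]
lemma left_base (f : Q → D) : (base f).left = f := rfl

@[simp]
lemma right_base (f : Q → D) : (base f).right = 1 := rfl

lemma inl_mul_base_mul_inl_inv (q : Q) (f : Q → D) :
    inl q * base f * inl q⁻¹ = base fun x ↦ f (q⁻¹ * x) := by
  ext <;> simp

lemma commute_inl_base {q : Q} {f : Q → D} (hf : ∀ x, f (q * x) = f x) :
    Commute (inl q) (base f) := by
  ext x
  · simpa using (hf (q⁻¹ * x)).symm
  · simp

end RegularWreathProduct

open RegularWreathProduct

abbrev Parities (n : ℕ) := Multiplicative (Fin n → ZMod 2)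

lemma Parities.inv_eq_self (q : Parities n) : q⁻¹ = q :=
  funext fun x ↦ ZMod.neg_eq_self_mod_two (q.toAdd x)

lemma Parities.mul_self (q : Parities n) : q * q = 1 :=
  mul_eq_one_iff_eq_inv.mpr (Parities.inv_eq_self q).symm

def crossingAt (s : PairIdx n) (N : Parities n) : GnP2 n :=
  PresentedGroup.of (s, ∑ x ∈ s.1, N.toAdd x)

lemma crossingAt_mul (s : PairIdx n) (q N : Parities n) :
    crossingAt s (q * N) =
      PresentedGroup.of (s, ∑ x ∈ s.1, q.toAdd x + ∑ x ∈ s.1, N.toAdd x) := by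
  simp [crossingAt, Finset.sum_add_distrib]

lemma commute_inl_base_crossingAt {s : PairIdx n} {q : Parities n}
    (hq : ∑ x ∈ s.1, q.toAdd x = 0) : Commute (inl q) (base (crossingAt s)) :=
  commute_inl_base fun N ↦ by rw [crossingAt_mul, hq, zero_add]; rfl

def tauShift (i : Fin n) : Parities n := .ofAdd (Pi.single i 1)

lemma sum_toAdd_tauShift (s : PairIdx n) (i : Fin n) :
    ∑ x ∈ s.1, (tauShift i).toAdd x = if i ∈ s.1 then 1 else 0 :=
  Finset.sum_pi_single' i 1 s.1

def psiGen : DIdx n → GnP2 n ≀ᵣ Parities n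
  | .inl s => base (crossingAt s)
  | .inr i => inl (tauShift i)

lemma psiGen_mul_self (x : DIdx n) : psiGen x * psiGen x = 1 := by
  cases x with
  | inl s =>
    obtain ⟨i, j, h, rfl⟩ := s.exists_eq_mkPair
    rw [psiGen, ← map_mul, ← map_one base]
    exact congrArg base (funext fun N ↦ AP_mul_self i j h _)
  | inr i => rw [psiGen, ← map_mul, Parities.mul_self, map_one]

lemma psiGen_triple (i j k : Fin n) (hij : i ≠ j) (hik : i ≠ k) (hjk : j ≠ k) :
    crossingAt (mkPair i j hij) * crossingAt (mkPair i k hik) * crossingAt (mkPair j k hjk) =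
      crossingAt (mkPair j k hjk) * crossingAt (mkPair i k hik) * crossingAt (mkPair i j hij) := by
  funext N
  refine AP_triple hij hik hjk ?_
  simp only [mkPair, Finset.sum_pair hij, Finset.sum_pair hik, Finset.sum_pair hjk]
  generalize N.toAdd i = a, N.toAdd j = b, N.toAdd k = c
  revert a b c
  decide

lemma psiGen_tau_tau_crossing (i j : Fin n) (h : i ≠ j) :
    inl (tauShift i) * inl (tauShift j) * base (crossingAt (mkPair i j h)) * inl (tauShift j) *
      inl (tauShift i) = base (crossingAt (mkPair i j h)) := by
  have hc : Commute (inl (tauShift i * tauShift j)) (base (crossingAt (mkPair i j h))) := by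
    refine commute_inl_base_crossingAt ?_
    simp [Finset.sum_add_distrib, sum_toAdd_tauShift, CharTwo.add_self_eq_zero]
  calc _ = inl (tauShift i * tauShift j) * base (crossingAt (mkPair i j h)) *
        inl (tauShift j * tauShift i) := by
        simp only [map_mul, mul_assoc]
    _ = _ := by
      rw [mul_comm (tauShift j), hc.eq, mul_assoc, ← map_mul, Parities.mul_self, map_one, mul_one]

def psi : GnD2 n →* GnP2 n ≀ᵣ Parities n :=
  PresentedGroup.toGroup <| lift_eq_one_of_mem_gnD2Rels (f := psiGen)
    (fun _ _ _ ↦ psiGen_mul_self _)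
    (fun _ _ _ _ hij hkl hik hil hjk hjl ↦
      Commute.map (funext fun _ ↦ (commute_AP_AP hij hkl hik hil hjk hjl _ _).eq) base)
    (fun i j k hij hik hjk ↦ by simp only [psiGen, ← map_mul, psiGen_triple i j k hij hik hjk])
    (fun _ ↦ psiGen_mul_self _)
    (fun _ _ ↦ (Commute.all _ _).map inl)
    psiGen_tau_tau_crossing
    (fun _ _ _ _ hki hkj ↦
      (commute_inl_base_crossingAt (by simp [sum_toAdd_tauShift, hki, hkj])).symm)

lemma psi_of (x : DIdx n) : psi (PresentedGroup.of x) = psiGen x :=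
  PresentedGroup.toGroup.of _

lemma psi_mkD_singleton (x : DIdx n) (b : Bool) : psi (mkD n [(x, b)]) = psiGen x := by
  cases b
  · have : mkD n [(x, false)] = (PresentedGroup.of x)⁻¹ := by
      rw [PresentedGroup.of, ← map_inv, FreeGroup.of, FreeGroup.inv_mk]
      rfl
    rw [this, map_inv, psi_of, inv_eq_of_mul_eq_one_right (psiGen_mul_self x)]
  · exact psi_of x

lemma mkD_cons (x : DIdx n × Bool) (L : List (DIdx n × Bool)) :
    mkD n (x :: L) = mkD n [x] * mkD n L := by
  rw [mkD, mkD, mkD, ← map_mul, FreeGroup.mul_mk]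
  rfl

lemma update_eq_tauShift_inv_mul (N : Fin n → ZMod 2) (i : Fin n) :
    Multiplicative.ofAdd (Function.update N i (N i + 1)) = (tauShift i)⁻¹ * .ofAdd N := by
  rw [Parities.inv_eq_self]
  ext x
  rcases eq_or_ne x i with rfl | hx
  · simp [tauShift, add_comm]
  · simp [tauShift, hx]

lemma psi_mkD_left (L : List (DIdx n × Bool)) (N : Fin n → ZMod 2) :
    (psi (mkD n L)).left (.ofAdd N) = chiWord n L N := by
  induction L generalizing N with
  | nil => rfl
  | cons x L ih =>
    obtain ⟨x | i, b⟩ := x <;> rw [mkD_cons, map_mul, psi_mkD_singleton]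
    · simp [psiGen, crossingAt, chiWord, ih]
    · simp [psiGen, chiWord, ← ih, update_eq_tauShift_inv_mul]

lemma psi_etaGen (s : PairIdx n) (ε : ZMod 2) :
    psi (etaGen (s, ε)) = base fun N ↦ PresentedGroup.of (s, ε + ∑ x ∈ s.1, N.toAdd x) := by
  have hT (m : Fin n) : psi (T m) = inl (tauShift m) := psi_of _
  have ha : psi (aD s) = base (crossingAt s) := psi_of _
  rcases zmod_two_eq_zero_or_one ε with rfl | rfl
  · simp only [etaGen_zero, ha, zero_add]
    rfl
  · rw [etaGen_eq_conj (c := s.min) (by simp [s.min_mem]), MulAut.conj_apply, map_mul, map_mul,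
      map_inv, ha, hT, ← map_inv, inl_mul_base_mul_inl_inv, Parities.inv_eq_self]
    simp only [crossingAt_mul, sum_toAdd_tauShift, s.min_mem, if_true]

def psiEtaBaseSubgroup (n : ℕ) : Subgroup (GnP2 n) where
  carrier := {β | (psi (eta β)).right = 1 ∧ (psi (eta β)).left 1 = β}
  one_mem' := by simp
  mul_mem' := by
    rintro a b ⟨ha₁, ha₂⟩ ⟨hb₁, hb₂⟩
    simp [ha₁, ha₂, hb₁, hb₂]
  inv_mem' := by
    rintro a ⟨ha₁, ha₂⟩
    simp [ha₁, ha₂]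

lemma psi_eta_left_one (β : GnP2 n) : (psi (eta β)).left 1 = β := by
  refine (PresentedGroup.generated_by _ (psiEtaBaseSubgroup n) (fun ⟨s, ε⟩ ↦ ?_) β).2
  show _ ∧ _
  simp [eta_of, psi_etaGen]

theorem stmt8_general (n : ℕ) :
    ∃ η : GnP2 n →* GnD2 n,
      (∀ (i j : Fin n) (h : i < j),
        η (AP i j h.ne 0) = AD i j h.ne ∧
        η (AP i j h.ne 1) = T i * AD i j h.ne * T i) ∧
      ∀ (β : GnP2 n) (L : List (DIdx n × Bool)),
        mkD n L = η β → chiWord n L (fun _ => 0) = β := by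
  refine ⟨eta, fun i j h ↦ ⟨?_, ?_⟩, fun β L hL ↦ ?_⟩
  · rw [AP, eta_of, etaGen_zero, aD_mkPair]
  · rw [AP, eta_of, etaGen_one]
  · rw [← psi_mkD_left, hL]
    exact psi_eta_left_one β

/-- `χ ∘ η` is the identity on `G_{n,P}^2`, where
`η(a_{ij}^0) = a_{ij}`, `η(a_{ij}^1) = τ_i a_{ij} τ_i`. -/
theorem stmt8 (n : ℕ) (hn : 2 < n) :
    ∃ η : GnP2 n →* GnD2 n,
      (∀ (i j : Fin n) (h : i < j),
        η (AP i j h.ne 0) = AD i j h.ne ∧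
        η (AP i j h.ne 1) = T i * AD i j h.ne * T i) ∧
      ∀ (β : GnP2 n) (L : List (DIdx n × Bool)),
        mkD n L = η β → chiWord n L (fun _ => 0) = β :=
  stmt8_general n
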